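/- For strongly positive formulas, C-expansion commutes with multi-abstraction up to β-reduction: if C = A₁ ⊃ ⋯ ⊃ Aₙ ⊃ X is strongly positive in X, U is a term context with U : B ⊢^Γ D, and Γ, x₁:A₁, …, xₙ:Aₙ ⊢ t : B, then the C-expansion ⟨C⟩_X{U} applied to λx₁…xₙ.t β-reduces to λx₁…xₙ.U[t], both of type A₁⊃⋯⊃Aₙ⊃D. -/

import Mathlib

/-- Formulas of second-order propositional logic: variables, ⊃, ∀. -/
inductive Fm : Type
  | var : ℕ → Fm
  | imp : Fm → Fm → Fm
  | all : ℕ → Fm → Fm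
deriving DecidableEq

namespace Fm

/-- `Free X A`: the variable `X` occurs free in `A`. -/
def Free (X : ℕ) : Fm → Prop
  | var Y => X = Y
  | imp A B => Free X A ∨ Free X B
  | all Y A => X ≠ Y ∧ Free X A

/-- Substitution of `C` for the free occurrences of `X`. -/
def subst (X : ℕ) (C : Fm) : Fm → Fm
  | var Y => if X = Y then C else var Y
  | imp A B => imp (subst X C A) (subst X C B)
  | all Y A => if X = Y then all Y A else all Y (subst X C A)

/-- `C` is substitutable (free) for `X` in the given formula (no capture). -/
def FreeFor (C : Fm) (X : ℕ) : Fm → Prop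
  | var _ => True
  | imp A B => FreeFor C X A ∧ FreeFor C X B
  | all Y A => (¬ Free X (all Y A)) ∨ (¬ Free Y C ∧ FreeFor C X A)

end Fm

/-- Natural deduction for second-order propositional logic.  When
`atomic = true` the witness of ∀-elimination must be a variable
(this is the system `NI²_at`, atomic System F). -/
inductive Deriv (atomic : Bool) : Set Fm → Fm → Prop
  | ax {Γ A} : A ∈ Γ → Deriv atomic Γ A
  | impI {Γ A B} : Deriv atomic (insert A Γ) B → Deriv atomic Γ (.imp A B)
  | impE {Γ A B} : Deriv atomic Γ (.imp A B) → Deriv atomic Γ A → Deriv atomic Γ B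
  | allI {Γ X A} : Deriv atomic Γ A → (∀ B ∈ Γ, ¬ Fm.Free X B) →
      Deriv atomic Γ (.all X A)
  | allE {Γ X A C} : Deriv atomic Γ (.all X A) → Fm.FreeFor C X A →
      (atomic = true → ∃ Y, C = Fm.var Y) →
      Deriv atomic Γ (Fm.subst X C A)

/-- Terms of System F (named variables; term variables and type variables
are drawn from separate copies of ℕ). -/
inductive Tm : Type
  | var : ℕ → Tm
  | lam : ℕ → Tm → Tm
  | app : Tm → Tm → Tm
  | tlam : ℕ → Tm → Tm
  | tapp : Tm → Fm → Tm
deriving DecidableEq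

namespace Tm

/-- Substitution of the term `u` for the term variable `x`. -/
def subst (x : ℕ) (u : Tm) : Tm → Tm
  | var z => if z = x then u else var z
  | lam z t => if z = x then lam z t else lam z (subst x u t)
  | app t v => app (subst x u t) (subst x u v)
  | tlam X t => tlam X (subst x u t)
  | tapp t B => tapp (subst x u t) B

/-- Substitution of the type `B` for the type variable `X` in a term. -/
def tsubst (X : ℕ) (B : Fm) : Tm → Tm
  | var z => var z
  | lam z t => lam z (tsubst X B t)
  | app t v => app (tsubst X B t) (tsubst X B v)
  | tlam Y t => if Y = X then tlam Y t else tlam Y (tsubst X B t)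
  | tapp t C => tapp (tsubst X B t) (Fm.subst X B C)

end Tm

/-- Lookup in a typing context (most recent declaration first). -/
def lookupVar (x : ℕ) : List (ℕ × Fm) → Option Fm
  | [] => none
  | (y, A) :: Γ => if x = y then some A else lookupVar x Γ

/-- Typing for System F (full ∀E). -/
inductive HasType : List (ℕ × Fm) → Tm → Fm → Prop
  | var {Γ x A} : lookupVar x Γ = some A → HasType Γ (.var x) A
  | lam {Γ x A B t} : HasType ((x, A) :: Γ) t B → HasType Γ (.lam x t) (.imp A B)
  | app {Γ A B t u} : HasType Γ t (.imp A B) → HasType Γ u A →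
      HasType Γ (.app t u) B
  | tlam {Γ X A t} : HasType Γ t A → (∀ p ∈ Γ, ¬ Fm.Free X p.2) →
      HasType Γ (.tlam X t) (.all X A)
  | tapp {Γ X A t} (B : Fm) : HasType Γ t (.all X A) → Fm.FreeFor B X A →
      HasType Γ (.tapp t B) (Fm.subst X B A)

/-- One-step β-reduction (⊃β and ∀β), closed under congruence. -/
inductive Step : Tm → Tm → Prop
  | beta (x : ℕ) (t u : Tm) : Step (.app (.lam x t) u) (Tm.subst x u t)
  | tbeta (X : ℕ) (t : Tm) (B : Fm) : Step (.tapp (.tlam X t) B) (Tm.tsubst X B t)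
  | congLam (x : ℕ) {t t'} : Step t t' → Step (.lam x t) (.lam x t')
  | congAppL {t t' u} : Step t t' → Step (.app t u) (.app t' u)
  | congAppR {t u u'} : Step u u' → Step (.app t u) (.app t u')
  | congTlam (X : ℕ) {t t'} : Step t t' → Step (.tlam X t) (.tlam X t')
  | congTapp {t t'} (B : Fm) : Step t t' → Step (.tapp t B) (.tapp t' B)

/-- Many-step β-reduction. -/
def BetaStar : Tm → Tm → Prop := Relation.ReflTransGen Step

/-- One-hole term contexts. -/
inductive Ctx : Type
  | hole : Ctx
  | lam : ℕ → Ctx → Ctx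
  | appL : Ctx → Tm → Ctx
  | appR : Tm → Ctx → Ctx
  | tlam : ℕ → Ctx → Ctx
  | tapp : Ctx → Fm → Ctx

namespace Ctx

/-- Filling the hole of a context with a term. -/
def fill : Ctx → Tm → Tm
  | hole, t => t
  | lam x U, t => .lam x (fill U t)
  | appL U u, t => .app (fill U t) u
  | appR u U, t => .app u (fill U t)
  | tlam X U, t => .tlam X (fill U t)
  | tapp U B, t => .tapp (fill U t) B

/-- The free term variables of a context. -/
def fvC : Ctx → Set ℕ
  | hole => ∅
  | lam x U => fvC U \ {x}
  | appL U u => fvC U ∪ tmFV u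
  | appR u U => tmFV u ∪ fvC U
  | tlam _ U => fvC U
  | tapp U _ => fvC U
where
  /-- free term variables of a term -/
  tmFV : Tm → Set ℕ
    | .var x => {x}
    | .lam x t => tmFV t \ {x}
    | .app t u => tmFV t ∪ tmFV u
    | .tlam _ t => tmFV t
    | .tapp t _ => tmFV t

end Ctx

/-- `A₁ ⊃ ⋯ ⊃ Aₙ ⊃ B`. -/
def impList : List Fm → Fm → Fm
  | [], B => B
  | A :: As, B => .imp A (impList As B)

/-- Iterated λ-abstraction over a list of variables. -/
def lamList : List ℕ → Tm → Tm
  | [], t => t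
  | x :: xs, t => .lam x (lamList xs t)

/-- Iterated application to a list of arguments. -/
def appList : Tm → List Tm → Tm
  | t, [] => t
  | t, u :: us => appList (.app t u) us


/-!
The C-expansion of `U` applied to `λx⃗.t` is `λx⃗.U[(λx⃗.t) x⃗]`; contracting the `n` redexes
`(λx⃗.t) x⃗ →* t` inside `U` and under `λx⃗` gives `λx⃗.U[t]`. For the typing, `U` is applied in
the context `Γ, x⃗ : A⃗` to `t` and to `(λx⃗.t) x⃗`, and abstracting `x⃗` gives `A⃗ ⊃ D`.
-/

theorem Tm.subst_var_self (x : ℕ) (t : Tm) : Tm.subst x (.var x) t = t := by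
  induction t with
  | var z => by_cases h : z = x <;> simp [Tm.subst, h]
  | lam z s ih => by_cases h : z = x <;> simp [Tm.subst, h, ih]
  | app s v ih₁ ih₂ => simp [Tm.subst, ih₁, ih₂]
  | tlam Y s ih => simp [Tm.subst, ih]
  | tapp s C ih => simp [Tm.subst, ih]

namespace Step

theorem fill (U : Ctx) {t t' : Tm} (h : Step t t') : Step (U.fill t) (U.fill t') := by
  induction U with
  | hole => exact h
  | lam x V ih => exact .congLam x ih
  | appL V u ih => exact .congAppL ih
  | appR u V ih => exact .congAppR ih
  | tlam Y V ih => exact .congTlam Y ih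
  | tapp V C ih => exact .congTapp C ih

theorem appList {f f' : Tm} (us : List Tm) (h : Step f f') :
    Step (appList f us) (appList f' us) := by
  induction us generalizing f f' with
  | nil => exact h
  | cons u us ih => exact ih (.congAppL h)

theorem lam_app_var_self (x : ℕ) (t : Tm) : Step (.app (.lam x t) (.var x)) t := by
  simpa only [Tm.subst_var_self] using Step.beta x t (.var x)

end Step

namespace BetaStar

theorem fill (U : Ctx) {t t' : Tm} (h : BetaStar t t') : BetaStar (U.fill t) (U.fill t') :=
  Relation.ReflTransGen.lift U.fill (fun _ _ => Step.fill U) _ _ h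

theorem lamList (xs : List ℕ) {t t' : Tm} (h : BetaStar t t') :
    BetaStar (lamList xs t) (lamList xs t') := by
  induction xs with
  | nil => exact h
  | cons x xs ih => exact Relation.ReflTransGen.lift (Tm.lam x) (fun _ _ => Step.congLam x) _ _ ih

theorem appList_lamList_map_var (xs : List ℕ) (t : Tm) :
    BetaStar (appList (_root_.lamList xs t) (xs.map Tm.var)) t := by
  induction xs with
  | nil => exact .refl
  | cons x xs ih => exact .head (Step.appList (xs.map Tm.var) (Step.lam_app_var_self x _)) ih

end BetaStar

theorem lookupVar_append (x : ℕ) (L Γ : List (ℕ × Fm)) :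
    lookupVar x (L ++ Γ) = (lookupVar x L).or (lookupVar x Γ) := by
  induction L with
  | nil => rfl
  | cons p L ih =>
    obtain ⟨y, A⟩ := p
    by_cases h : x = y <;> simp [lookupVar, h, ih]

theorem lookupVar_append_cons {x : ℕ} {L : List (ℕ × Fm)} (hx : lookupVar x L = none)
    (A : Fm) (Γ : List (ℕ × Fm)) (y : ℕ) :
    lookupVar y (L ++ (x, A) :: Γ) = lookupVar y ((x, A) :: (L ++ Γ)) := by
  by_cases h : y = x
  · subst h
    simp [lookupVar_append, lookupVar, hx]
  · simp [lookupVar_append, lookupVar, h]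

theorem lookupVar_zip_of_not_mem {x : ℕ} {xs : List ℕ} (hx : x ∉ xs) (As : List Fm) :
    lookupVar x (xs.zip As) = none := by
  induction xs generalizing As with
  | nil => rfl
  | cons y xs ih =>
    rw [List.mem_cons, not_or] at hx
    cases As with
    | nil => rfl
    | cons A As => simp [lookupVar, hx.1, ih hx.2]

theorem lookupVar_zip_append {xs : List ℕ} (hnd : xs.Nodup) (As : List Fm)
    (Γ : List (ℕ × Fm)) : ∀ p ∈ xs.zip As, lookupVar p.1 (xs.zip As ++ Γ) = some p.2 := by
  induction xs generalizing As with
  | nil => simp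
  | cons x xs ih =>
    rw [List.nodup_cons] at hnd
    cases As with
    | nil => simp
    | cons A As =>
      rintro ⟨y, B⟩ hp
      rcases List.mem_cons.mp hp with h | hp
      · simp_all [lookupVar]
      · have hyx : y ≠ x := fun h => hnd.1 (h ▸ (List.of_mem_zip hp).1)
        simpa [lookupVar, hyx] using ih hnd.2 As (y, B) hp

namespace HasType

-- The inclusion `hsub` is what the side condition of `∀`-introduction needs.
theorem congr_ctx {Γ : List (ℕ × Fm)} {t : Tm} {A : Fm} (h : HasType Γ t A)
    {Γ' : List (ℕ × Fm)} (hlookup : ∀ x, lookupVar x Γ' = lookupVar x Γ)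
    (hsub : ∀ p ∈ Γ', p ∈ Γ) : HasType Γ' t A := by
  induction h generalizing Γ' with
  | var h => exact .var ((hlookup _).trans h)
  | @lam Γ x A B s _ ih =>
    refine .lam (ih (fun y => ?_) (List.cons_subset_cons _ hsub))
    by_cases hy : y = x <;> simp [lookupVar, hy, hlookup y]
  | app _ _ ih₁ ih₂ => exact .app (ih₁ hlookup hsub) (ih₂ hlookup hsub)
  | tlam _ hX ih => exact .tlam (ih hlookup hsub) (fun p hp => hX p (hsub p hp))
  | tapp C _ hff ih => exact .tapp C (ih hlookup hsub) hff

theorem append_prefix_self {L Γ : List (ℕ × Fm)} {t : Tm} {B : Fm}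
    (h : HasType (L ++ Γ) t B) : HasType (L ++ (L ++ Γ)) t B :=
  h.congr_ctx (fun y => by cases hy : lookupVar y L <;> simp [lookupVar_append, hy])
    (fun p hp => by simp only [List.mem_append] at hp ⊢; tauto)

theorem lamList {xs : List ℕ} (hnd : xs.Nodup) {As : List Fm} (hlen : xs.length = As.length)
    {Γ : List (ℕ × Fm)} {s : Tm} {D : Fm} (h : HasType (xs.zip As ++ Γ) s D) :
    HasType Γ (lamList xs s) (impList As D) := by
  induction xs generalizing As Γ with
  | nil =>
    cases As with
    | nil => exact h
    | cons A As => simp at hlen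
  | cons x xs ih =>
    rw [List.nodup_cons] at hnd
    cases As with
    | nil => simp at hlen
    | cons A As =>
      refine .lam (ih hnd.2 (by simpa using hlen) (h.congr_ctx ?_ ?_))
      · exact lookupVar_append_cons (lookupVar_zip_of_not_mem hnd.1 As) A Γ
      · exact fun p hp => List.perm_middle.mem_iff.mp hp

theorem appList_map_var {xs : List ℕ} {As : List Fm} (hlen : xs.length = As.length)
    {Δ : List (ℕ × Fm)} (hlookup : ∀ p ∈ xs.zip As, lookupVar p.1 Δ = some p.2)
    {f : Tm} {B : Fm} (hf : HasType Δ f (impList As B)) :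
    HasType Δ (appList f (xs.map Tm.var)) B := by
  induction xs generalizing As f with
  | nil =>
    cases As with
    | nil => exact hf
    | cons A As => simp at hlen
  | cons x xs ih =>
    cases As with
    | nil => simp at hlen
    | cons A As =>
      have hx : lookupVar x Δ = some A := hlookup (x, A) (by simp)
      exact ih (by simpa using hlen) (fun p hp => hlookup p (by simp [hp])) (hf.app (.var hx))

end HasType

theorem cexpansion_commutes_general (As : List Fm)
    (Γ : List (ℕ × Fm)) (B D : Fm) (U : Ctx) (t : Tm) (xs : List ℕ)
    (hlen : xs.length = As.length) (hnd : xs.Nodup)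
    (hfresh : ∀ x ∈ xs, x ∉ Ctx.fvC U ∧ lookupVar x Γ = none)
    (hU : ∀ (Δ : List (ℕ × Fm)) (s : Tm), (∀ p ∈ Δ, p.1 ∉ Ctx.fvC U) →
      HasType (Δ ++ Γ) s B → HasType (Δ ++ Γ) (Ctx.fill U s) D)
    (ht : HasType (xs.zip As ++ Γ) t B) :
    BetaStar
        (lamList xs (Ctx.fill U (appList (lamList xs t) (xs.map Tm.var))))
        (lamList xs (Ctx.fill U t)) ∧
      HasType Γ (lamList xs (Ctx.fill U (appList (lamList xs t) (xs.map Tm.var))))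
        (impList As D) ∧
      HasType Γ (lamList xs (Ctx.fill U t)) (impList As D) := by
  have hU' : ∀ s, HasType (xs.zip As ++ Γ) s B → HasType (xs.zip As ++ Γ) (U.fill s) D :=
    fun s => hU _ s fun p hp => (hfresh p.1 (List.of_mem_zip hp).1).1
  -- `λx⃗.t` is typed in `Γ, x⃗ : A⃗` because declaring `x⃗ : A⃗` twice changes nothing
  have hlam : HasType (xs.zip As ++ Γ) (lamList xs t) (impList As B) :=
    .lamList hnd hlen ht.append_prefix_self
  have happ : HasType (xs.zip As ++ Γ) (appList (lamList xs t) (xs.map Tm.var)) B :=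
    hlam.appList_map_var hlen (lookupVar_zip_append hnd As Γ)
  exact ⟨.lamList xs (.fill U (.appList_lamList_map_var xs t)),
    .lamList hnd hlen (hU' _ happ), .lamList hnd hlen (hU' t ht)⟩

/-- C-expansion commutes with multi-abstraction up to β-reduction:  for
`C = A₁⊃⋯⊃Aₙ⊃X` strongly positive in `X` (i.e. `X` not free in the `Aᵢ`),
a context `U : B ⊢^Γ D` and a term `t` with `Γ, x₁:A₁,…,xₙ:Aₙ ⊢ t : B`,
the C-expansion `⟨C⟩_X{U}` applied to `λx₁…xₙ.t`, namely
`λx₁…xₙ.U[(λx₁…xₙ.t) x₁ ⋯ xₙ]`, β-reduces to `λx₁…xₙ.U[t]`, and both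
terms have type `A₁⊃⋯⊃Aₙ⊃D`. -/
theorem cexpansion_commutes (X : ℕ) (As : List Fm) (hsp : ∀ A ∈ As, ¬ Fm.Free X A)
    (Γ : List (ℕ × Fm)) (B D : Fm) (U : Ctx) (t : Tm) (xs : List ℕ)
    (hlen : xs.length = As.length) (hnd : xs.Nodup)
    (hfresh : ∀ x ∈ xs, x ∉ Ctx.fvC U ∧ lookupVar x Γ = none)
    (hU : ∀ (Δ : List (ℕ × Fm)) (s : Tm), (∀ p ∈ Δ, p.1 ∉ Ctx.fvC U) →
      HasType (Δ ++ Γ) s B → HasType (Δ ++ Γ) (Ctx.fill U s) D)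
    (ht : HasType (xs.zip As ++ Γ) t B) :
    BetaStar
        (lamList xs (Ctx.fill U (appList (lamList xs t) (xs.map Tm.var))))
        (lamList xs (Ctx.fill U t)) ∧
      HasType Γ (lamList xs (Ctx.fill U (appList (lamList xs t) (xs.map Tm.var))))
        (impList As D) ∧
      HasType Γ (lamList xs (Ctx.fill U t)) (impList As D) :=
  cexpansion_commutes_general As Γ B D U t xs hlen hnd hfresh hU ht
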